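/- arXiv:math-ph/0012027 — 3 statements merged into one kernel-verified Lean document; each statement's English description precedes it below -/
import Mathlib

section
/- Let $t > 0$, $\theta \in (0,\pi)$, and set $x = -\sqrt{t}\sin(\theta/2)$, $y = \sqrt{t}\cos(\theta/2)$. Then $\int_{-\infty}^{\infty} \frac{s e^{-s^2}}{(x-s)^2 + y^2}\,ds < 0$. -/
open Real MeasureTheory

/-- For `t > 0`, `θ ∈ (0,π)`, `x = -√t sin(θ/2)`, `y = √t cos(θ/2)`,
`∫ s e^{-s²} / ((x-s)² + y²) ds < 0`. -/
theorem stmt_2 (t θ x y : ℝ) (ht : 0 < t) (hθ : θ ∈ Set.Ioo 0 π)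
    (hx : x = -Real.sqrt t * Real.sin (θ/2))
    (hy : y = Real.sqrt t * Real.cos (θ/2)) :
    (∫ s : ℝ, s * Real.exp (-s^2) / ((x - s)^2 + y^2)) < 0 := by
  have hpi := Real.pi_pos
  have hst : 0 < Real.sqrt t := Real.sqrt_pos.2 ht
  have hy0 : 0 < y := by
    rw [hy]
    exact mul_pos hst (Real.cos_pos_of_mem_Ioo ⟨by linarith [hθ.1], by linarith [hθ.2]⟩)
  have hx0 : x < 0 := by
    have hs : 0 < Real.sin (θ/2) :=
      Real.sin_pos_of_pos_of_lt_pi (by linarith [hθ.1]) (by linarith [hθ.2])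
    rw [hx]; nlinarith
  set f : ℝ → ℝ := fun s => s * Real.exp (-s^2) / ((x - s)^2 + y^2) with hf
  have hD : ∀ a s : ℝ, 0 < (a - s)^2 + y^2 := fun a s => by positivity
  have hcont : Continuous f := by
    apply Continuous.div (by continuity) (by continuity)
    intro s; exact ne_of_gt (hD x s)
  have hint : Integrable f := by
    have hb : Integrable (fun s : ℝ => |s * Real.exp (-1 * s^2)| / y^2) :=
      (integrable_mul_exp_neg_mul_sq one_pos).abs.div_const _
    refine hb.mono' hcont.aestronglyMeasurable (Filter.Eventually.of_forall fun s => ?_)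
    have h1 : y^2 ≤ (x - s)^2 + y^2 := by nlinarith [sq_nonneg (x - s)]
    have : ‖f s‖ = |s * Real.exp (-s^2)| / ((x - s)^2 + y^2) := by
      rw [Real.norm_eq_abs, abs_div, abs_of_pos (hD x s)]
    rw [this]
    calc |s * Real.exp (-s^2)| / ((x - s)^2 + y^2)
        ≤ |s * Real.exp (-s^2)| / y^2 :=
          div_le_div_of_nonneg_left (abs_nonneg _) (by positivity) h1
      _ = |s * Real.exp (-1 * s^2)| / y^2 := by norm_num
  have hint2 : Integrable (fun s => f (-s)) := hint.comp_neg
  have hneg : (∫ s : ℝ, f (-s)) = ∫ s : ℝ, f s := integral_neg_eq_self f volume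
  set g : ℝ → ℝ := fun s => f s + f (-s) with hg
  have hgint : Integrable g := hint.add hint2
  have hsum : (∫ s : ℝ, g s) = 2 * ∫ s : ℝ, f s := by
    rw [hg]
    rw [integral_add hint hint2, hneg]; ring
  -- key identity
  have hkey : ∀ s : ℝ, g s =
      (4 * x) * (s^2 * Real.exp (-s^2)) / (((x - s)^2 + y^2) * ((x + s)^2 + y^2)) := by
    intro s
    have h1 := ne_of_gt (hD x s)
    have h2 : ((x + s)^2 + y^2) ≠ 0 := by positivity
    simp only [hg, hf, neg_neg, neg_sq, sub_neg_eq_add]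
    field_simp
    ring
  have hgle : ∀ s : ℝ, g s ≤ 0 := by
    intro s
    rw [hkey s]
    apply div_nonpos_of_nonpos_of_nonneg
    · have h := mul_nonneg (sq_nonneg s) (Real.exp_pos (-s^2)).le
      nlinarith
    · positivity
  have hglt : ∀ s : ℝ, 0 < s → g s < 0 := by
    intro s hs
    rw [hkey s]
    apply div_neg_of_neg_of_pos
    · have h := mul_pos (pow_pos hs 2) (Real.exp_pos (-s^2))
      nlinarith
    · positivity
  have hpos : 0 < ∫ s : ℝ, (-g) s := by
    rw [integral_pos_iff_support_of_nonneg (fun s => by simpa using hgle s) hgint.neg]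
    refine lt_of_lt_of_le ?_ (measure_mono (fun s (hs : s ∈ Set.Ioi (0:ℝ)) => ?_))
    · show (0:ENNReal) < volume (Set.Ioi (0:ℝ))
      simp [Real.volume_Ioi]
    · simp only [Function.mem_support]
      exact ne_of_lt (by simpa using hglt s hs) |>.symm
  have hneg' : (∫ s : ℝ, (-g) s) = -∫ s : ℝ, g s := by
    simp only [Pi.neg_apply]; exact integral_neg g
  rw [hneg'] at hpos
  linarith [hsum ▸ (by linarith : (∫ s : ℝ, g s) < 0)]
end

section
/- Suppose $u$ is continuously differentiable on $[0,\infty)$ and satisfies the integrodifferential equation $u'(\tau) + u(\tau) + \sqrt{\kappa/\pi}\int_0^\tau \frac{u'(s)}{\sqrt{\tau-s}}\,ds = 1$ for all $\tau > 0$, with $u$ twice differentiable on $(0,\infty)$. Then $u$ satisfies $u''(\tau) + (2-\kappa)u'(\tau) + u(\tau) = 1 + \sqrt{\frac{\kappa}{\pi\tau}}(u(0)-1)$ for $\tau > 0$, and $u'(0) = 1 - u(0)$. -/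
open Real intervalIntegral MeasureTheory Set

set_option maxHeartbeats 1000000

lemma aux_one_div_sqrt (x : ℝ) : 1 / Real.sqrt x = x ^ (-(1/2) : ℝ) := by
  rcases lt_trichotomy x 0 with hx | rfl | hx
  · rw [Real.sqrt_eq_zero_of_nonpos hx.le, Real.rpow_def_of_neg hx]
    have : Real.cos (2⁻¹ * π) = 0 := by
      rw [show (2⁻¹:ℝ) * π = π/2 by ring, Real.cos_pi_div_two]
    simp [this]
  · rw [Real.zero_rpow (by norm_num)]; simp
  · rw [Real.rpow_neg hx.le, Real.sqrt_eq_rpow, one_div, one_div]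

lemma ker_int' (s a b : ℝ) : IntervalIntegrable (fun t => 1 / Real.sqrt (t - s)) volume a b := by
  simp only [aux_one_div_sqrt]
  simpa using (intervalIntegrable_rpow' (a := a - s) (b := b - s) (r := -(1/2))
    (by norm_num)).comp_sub_right s

lemma ker_int (t a b : ℝ) : IntervalIntegrable (fun s => 1 / Real.sqrt (t - s)) volume a b := by
  simp only [aux_one_div_sqrt]
  simpa using (intervalIntegrable_rpow' (a := t - a) (b := t - b) (r := -(1/2))
    (by norm_num)).comp_sub_left t

lemma ker_val {t : ℝ} (ht : 0 ≤ t) : ∫ s in (0:ℝ)..t, 1 / Real.sqrt (t - s) = 2 * Real.sqrt t := by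
  simp only [aux_one_div_sqrt]
  rw [intervalIntegral.integral_comp_sub_left (fun x => x ^ (-(1/2):ℝ)) t]
  rw [sub_self, sub_zero, integral_rpow (Or.inl (by norm_num))]
  rw [show (-(1/2) : ℝ) + 1 = 1/2 by norm_num]
  rw [Real.zero_rpow (by norm_num), ← Real.sqrt_eq_rpow]
  ring

lemma mul_ker_int {f : ℝ → ℝ} (hf : Continuous f) (t a b : ℝ) :
    IntervalIntegrable (fun s => f s / Real.sqrt (t - s)) volume a b := by
  have := (ker_int t a b).continuousOn_mul (hf.continuousOn (s := uIcc a b))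
  have heq : (fun s => f s / Real.sqrt (t - s)) = fun s => f s * (1 / Real.sqrt (t - s)) := by
    funext s; rw [mul_one_div]
  rw [heq]; exact this

lemma beta_meas (s T : ℝ) :
    Measurable (fun t => 1 / (Real.sqrt (t - s) * Real.sqrt (T - t))) :=
  measurable_const.div
    ((Real.continuous_sqrt.measurable.comp (measurable_id.sub measurable_const)).mul
      (Real.continuous_sqrt.measurable.comp (measurable_const.sub measurable_id)))

lemma beta_ker_int {s T : ℝ} (h : s < T) :
    IntervalIntegrable (fun t => 1 / (Real.sqrt (t - s) * Real.sqrt (T - t))) volume s T := by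
  set m := (s + T) / 2 with hm
  have hsm : s < m := by rw [hm]; linarith
  have hmT : m < T := by rw [hm]; linarith
  rw [intervalIntegrable_iff_integrableOn_Ioc_of_le h.le,
    ← Set.Ioc_union_Ioc_eq_Ioc hsm.le hmT.le]
  apply IntegrableOn.union
  · apply Integrable.mono' (g := fun t => (1/Real.sqrt (T - m)) * (1/Real.sqrt (t - s)))
    · exact (intervalIntegrable_iff_integrableOn_Ioc_of_le hsm.le).1 ((ker_int' s s m).const_mul _)
    · exact (beta_meas s T).aestronglyMeasurable
    · filter_upwards [ae_restrict_mem measurableSet_Ioc] with t ht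
      have h1 : 0 < Real.sqrt (t - s) := Real.sqrt_pos.2 (by linarith [ht.1])
      have h2 : 0 < Real.sqrt (T - m) := Real.sqrt_pos.2 (by linarith)
      have h3 : Real.sqrt (T - m) ≤ Real.sqrt (T - t) := Real.sqrt_le_sqrt (by linarith [ht.2])
      rw [Real.norm_of_nonneg (by positivity), one_div_mul_one_div]
      exact one_div_le_one_div_of_le (by positivity) (by nlinarith)
  · apply Integrable.mono' (g := fun t => (1/Real.sqrt (m - s)) * (1/Real.sqrt (T - t)))
    · exact (intervalIntegrable_iff_integrableOn_Ioc_of_le hmT.le).1 ((ker_int T m T).const_mul _)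
    · exact (beta_meas s T).aestronglyMeasurable
    · filter_upwards [ae_restrict_mem measurableSet_Ioc] with t ht
      have h2 : 0 < Real.sqrt (m - s) := Real.sqrt_pos.2 (by linarith)
      have h3 : Real.sqrt (m - s) ≤ Real.sqrt (t - s) := Real.sqrt_le_sqrt (by linarith [ht.1])
      rcases eq_or_lt_of_le ht.2 with hTt | hTt
      · rw [← hTt]
        simp only [sub_self, Real.sqrt_zero, mul_zero, div_zero, norm_zero]
        positivity
      · have h1 : 0 < Real.sqrt (T - t) := Real.sqrt_pos.2 (by linarith)
        rw [Real.norm_of_nonneg (by positivity), one_div_mul_one_div]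
        exact one_div_le_one_div_of_le (by positivity) (by nlinarith)

lemma beta_val {s T : ℝ} (h : s < T) :
    ∫ t in s..T, 1 / (Real.sqrt (t - s) * Real.sqrt (T - t)) = π := by
  have hL : (0:ℝ) < T - s := by linarith
  set φ : ℝ → ℝ := fun t => Real.arcsin ((2*t - s - T) / (T - s)) with hφ
  have hcont : ContinuousOn φ (Icc s T) := by
    apply Continuous.continuousOn
    exact Real.continuous_arcsin.comp (by continuity)
  have hderiv : ∀ t ∈ Ioo s T,
      HasDerivWithinAt φ (1 / (Real.sqrt (t - s) * Real.sqrt (T - t))) (Ioi t) t := by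
    intro t ht
    set z := (2*t - s - T) / (T - s) with hz
    have hz1 : -1 < z := by
      rw [hz, lt_div_iff₀ hL]; nlinarith [ht.1]
    have hz2 : z < 1 := by
      rw [hz, div_lt_iff₀ hL]; nlinarith [ht.2]
    have hin : HasDerivAt (fun t : ℝ => (2*t - s - T) / (T - s)) (2 / (T - s)) t := by
      have : HasDerivAt (fun t : ℝ => 2*t - s - T) 2 t := by
        simpa using (((hasDerivAt_id t).const_mul (2:ℝ)).sub_const s).sub_const T
      simpa using this.div_const (T - s)
    have harc : HasDerivAt Real.arcsin (1 / Real.sqrt (1 - z^2)) z :=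
      Real.hasDerivAt_arcsin (by linarith) (by linarith)
    have hcomp := (harc.comp t hin)
    have h1 : (0:ℝ) < t - s := by linarith [ht.1]
    have h2 : (0:ℝ) < T - t := by linarith [ht.2]
    have hsq : 1 - z^2 = (2 * Real.sqrt (t-s) * Real.sqrt (T-t) / (T - s))^2 := by
      have e1 : Real.sqrt (t-s) ^ 2 = t - s := Real.sq_sqrt h1.le
      have e2 : Real.sqrt (T-t) ^ 2 = T - t := Real.sq_sqrt h2.le
      rw [hz]
      field_simp
      nlinarith [e1, e2]
    have hval : 1 / Real.sqrt (1 - z^2) * (2 / (T - s))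
        = 1 / (Real.sqrt (t - s) * Real.sqrt (T - t)) := by
      rw [hsq, Real.sqrt_sq (by positivity)]
      have n1 : Real.sqrt (t-s) ≠ 0 := by positivity
      have n2 : Real.sqrt (T-t) ≠ 0 := by positivity
      field_simp
    rw [hval] at hcomp
    exact hcomp.hasDerivWithinAt
  have := intervalIntegral.integral_eq_sub_of_hasDeriv_right_of_le h.le hcont hderiv (beta_ker_int h)
  rw [this]
  have hT' : φ T = π/2 := by
    show Real.arcsin _ = _
    rw [show (2*T - s - T) / (T - s) = 1 by rw [div_eq_one_iff_eq (ne_of_gt hL)]; ring,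
      Real.arcsin_one]
  have hs' : φ s = -(π/2) := by
    show Real.arcsin _ = _
    rw [show (2*s - s - T) / (T - s) = -1 by rw [div_eq_iff (ne_of_gt hL)]; ring,
      Real.arcsin_neg_one]
  rw [hT', hs']; ring

lemma intervalIntegrable_of_eqOn_zero {F : ℝ → ℝ} {a b : ℝ} (h : ∀ x ∈ uIcc a b, F x = 0) :
    IntervalIntegrable F volume a b := by
  constructor
  · exact (integrableOn_zero : IntegrableOn (fun _ : ℝ => (0:ℝ)) _ _).congr_fun
      (fun x hx => (h x (Icc_subset_uIcc (Ioc_subset_Icc_self hx))).symm) measurableSet_Ioc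
  · refine (integrableOn_zero : IntegrableOn (fun _ : ℝ => (0:ℝ)) _ _).congr_fun
      (fun x hx => (h x ?_).symm) measurableSet_Ioc
    rw [uIcc_comm]; exact Icc_subset_uIcc (Ioc_subset_Icc_self hx)

lemma abel_aux {f : ℝ → ℝ} (hf : Continuous f) {t T : ℝ} (htT : t ≤ T) :
    ∫ s in (0:ℝ)..T, f s / Real.sqrt (t - s) = ∫ s in (0:ℝ)..t, f s / Real.sqrt (t - s) := by
  rw [← intervalIntegral.integral_add_adjacent_intervals (mul_ker_int hf t 0 t)
    (mul_ker_int hf t t T)]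
  have hz : ∫ s in t..T, f s / Real.sqrt (t - s) = 0 := by
    rw [intervalIntegral.integral_congr (g := fun _ => 0) ?_, intervalIntegral.integral_zero]
    intro x hx
    rw [uIcc_of_le htT] at hx
    have : t - x ≤ 0 := by linarith [hx.1]
    simp [Real.sqrt_eq_zero_of_nonpos this]
  rw [hz, add_zero]

lemma abel_transform {f : ℝ → ℝ} (hf : Continuous f) {T : ℝ} (hT : 0 < T) :
    ∫ t in (0:ℝ)..T, (∫ s in (0:ℝ)..t, f s / Real.sqrt (t - s)) / Real.sqrt (T - t)
      = π * ∫ s in (0:ℝ)..T, f s := by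
  have hμ : ∀ h : ℝ → ℝ, ∫ x in (0:ℝ)..T, h x = ∫ x in Ioo (0:ℝ) T, h x := fun h => by
    rw [intervalIntegral.integral_of_le hT.le, integral_Ioc_eq_integral_Ioo]
  obtain ⟨M, hM⟩ := isCompact_Icc.exists_bound_of_continuousOn (hf.continuousOn (s := Icc (0:ℝ) T))
  have hM'0 : (0:ℝ) ≤ max M 0 := le_max_right _ _
  set M' := max M 0 with hM'def
  have hMf : ∀ s ∈ Icc (0:ℝ) T, |f s| ≤ M' := fun s hs => le_trans (hM s hs) (le_max_left _ _)
  have hgm : AEStronglyMeasurable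
      (Function.uncurry fun t s => f s / Real.sqrt (t - s) * (1 / Real.sqrt (T - t)))
      ((volume.restrict (Ioo (0:ℝ) T)).prod (volume.restrict (Ioo (0:ℝ) T))) := by
    apply Measurable.aestronglyMeasurable
    apply Measurable.mul
    · exact (hf.measurable.comp measurable_snd).div
        (Real.continuous_sqrt.measurable.comp (measurable_fst.sub measurable_snd))
    · exact measurable_const.div
        (Real.continuous_sqrt.measurable.comp (measurable_const.sub measurable_fst))
  have hInt : Integrable
      (Function.uncurry fun t s => f s / Real.sqrt (t - s) * (1 / Real.sqrt (T - t)))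
      ((volume.restrict (Ioo (0:ℝ) T)).prod (volume.restrict (Ioo (0:ℝ) T))) := by
    rw [integrable_prod_iff hgm]
    simp only [Function.uncurry_apply_pair]
    constructor
    · filter_upwards [ae_restrict_mem measurableSet_Ioo] with t _
      have h1 : IntegrableOn (fun s => f s / Real.sqrt (t - s)) (Ioo 0 T) volume :=
        (((intervalIntegrable_iff_integrableOn_Ioc_of_le hT.le).1
          (mul_ker_int hf t 0 T)).mono_set Ioo_subset_Ioc_self)
      exact h1.mul_const _
    · apply Integrable.mono' (g := fun t => (2 * M' * Real.sqrt T) * (1 / Real.sqrt (T - t)))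
      · exact (((intervalIntegrable_iff_integrableOn_Ioc_of_le hT.le).1
          ((ker_int T 0 T).const_mul _)).mono_set Ioo_subset_Ioc_self)
      · exact hgm.norm.integral_prod_right'
      · filter_upwards [ae_restrict_mem measurableSet_Ioo] with t ht
        have hnorm : (fun s => ‖f s / Real.sqrt (t - s) * (1 / Real.sqrt (T - t))‖)
            = fun s => |f s| / Real.sqrt (t - s) * (1 / Real.sqrt (T - t)) := by
          funext s
          simp only [Real.norm_eq_abs, abs_mul, abs_div, abs_one,
            abs_of_nonneg (Real.sqrt_nonneg _)]
        have hInner : ∫ s in Ioo (0:ℝ) T, ‖f s / Real.sqrt (t - s) * (1 / Real.sqrt (T - t))‖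
            = (∫ s in (0:ℝ)..t, |f s| / Real.sqrt (t - s)) * (1 / Real.sqrt (T - t)) := by
          rw [hnorm, MeasureTheory.integral_mul_const, ← hμ, abel_aux hf.abs ht.2.le]
        have hb1 : ∫ s in (0:ℝ)..t, |f s| / Real.sqrt (t - s) ≤ M' * (2 * Real.sqrt t) := by
          rw [← ker_val ht.1.le, ← intervalIntegral.integral_const_mul]
          apply intervalIntegral.integral_mono_on ht.1.le (mul_ker_int hf.abs t 0 t)
            ((ker_int t 0 t).const_mul _)
          intro s hs
          rw [div_eq_mul_one_div]
          exact mul_le_mul_of_nonneg_right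
            (hMf s ⟨hs.1, le_trans hs.2 ht.2.le⟩) (by positivity)
        have hb2 : (0:ℝ) ≤ ∫ s in Ioo (0:ℝ) T,
            ‖f s / Real.sqrt (t - s) * (1 / Real.sqrt (T - t))‖ :=
          integral_nonneg fun s => norm_nonneg _
        rw [Real.norm_of_nonneg hb2, hInner]
        calc (∫ s in (0:ℝ)..t, |f s| / Real.sqrt (t - s)) * (1 / Real.sqrt (T - t))
            ≤ (M' * (2 * Real.sqrt t)) * (1 / Real.sqrt (T - t)) :=
              mul_le_mul_of_nonneg_right hb1 (by positivity)
          _ ≤ (2 * M' * Real.sqrt T) * (1 / Real.sqrt (T - t)) := by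
              refine mul_le_mul_of_nonneg_right ?_ (by positivity)
              have := Real.sqrt_le_sqrt ht.2.le
              nlinarith [Real.sqrt_nonneg t]
  have hswap := MeasureTheory.integral_integral_swap hInt
  have hLHS : ∫ t in (0:ℝ)..T, (∫ s in (0:ℝ)..t, f s / Real.sqrt (t - s)) / Real.sqrt (T - t)
      = ∫ t in Ioo (0:ℝ) T, (∫ s in Ioo (0:ℝ) T,
          f s / Real.sqrt (t - s) * (1 / Real.sqrt (T - t))) := by
    rw [hμ]
    apply setIntegral_congr_fun measurableSet_Ioo
    intro t ht
    show (∫ s in (0:ℝ)..t, f s / Real.sqrt (t - s)) / Real.sqrt (T - t)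
      = ∫ s in Ioo (0:ℝ) T, f s / Real.sqrt (t - s) * (1 / Real.sqrt (T - t))
    rw [MeasureTheory.integral_mul_const, ← hμ, abel_aux hf ht.2.le, mul_one_div]
  have hRHS : ∫ s in Ioo (0:ℝ) T, (∫ t in Ioo (0:ℝ) T,
      f s / Real.sqrt (t - s) * (1 / Real.sqrt (T - t))) = π * ∫ s in (0:ℝ)..T, f s := by
    have hptw : ∀ s ∈ Ioo (0:ℝ) T, (∫ t in Ioo (0:ℝ) T,
        f s / Real.sqrt (t - s) * (1 / Real.sqrt (T - t))) = π * f s := by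
      intro s hs
      have hginner : (fun t => f s / Real.sqrt (t - s) * (1 / Real.sqrt (T - t)))
          = fun t => f s * (1 / (Real.sqrt (t - s) * Real.sqrt (T - t))) := by
        funext t
        rw [div_mul_div_comm, mul_one, mul_one_div]
      rw [hginner, ← hμ]
      have hi1 : IntervalIntegrable
          (fun t => f s * (1 / (Real.sqrt (t - s) * Real.sqrt (T - t)))) volume 0 s := by
        apply intervalIntegrable_of_eqOn_zero
        intro x hx
        rw [uIcc_of_le hs.1.le] at hx
        have : x - s ≤ 0 := by linarith [hx.2]
        simp [Real.sqrt_eq_zero_of_nonpos this]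
      have hi2 : IntervalIntegrable
          (fun t => f s * (1 / (Real.sqrt (t - s) * Real.sqrt (T - t)))) volume s T :=
        (beta_ker_int hs.2).const_mul (f s)
      rw [← intervalIntegral.integral_add_adjacent_intervals hi1 hi2]
      have hz : ∫ t in (0:ℝ)..s, f s * (1 / (Real.sqrt (t - s) * Real.sqrt (T - t))) = 0 := by
        rw [intervalIntegral.integral_congr (g := fun _ => 0) ?_, intervalIntegral.integral_zero]
        intro x hx
        rw [uIcc_of_le hs.1.le] at hx
        have : x - s ≤ 0 := by linarith [hx.2]
        simp [Real.sqrt_eq_zero_of_nonpos this]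
      rw [hz, zero_add, intervalIntegral.integral_const_mul, beta_val hs.2]
      ring
    rw [setIntegral_congr_fun measurableSet_Ioo hptw, ← hμ,
      intervalIntegral.integral_const_mul]
  rw [hLHS, hswap, hRHS]
/-- If `u` is `C¹` on `[0,∞)`, twice differentiable on `(0,∞)`, and satisfies the
integrodifferential equation
`u'(τ) + u(τ) + √(κ/π) ∫₀^τ u'(s)/√(τ-s) ds = 1` for all `τ > 0`, then `u` satisfies
`u'' + (2-κ)u' + u = 1 + √(κ/(πτ))(u(0)-1)` for `τ > 0`, and `u'(0) = 1 - u(0)`. -/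
theorem stmt_13 (κ : ℝ) (hκ : 0 < κ) (u : ℝ → ℝ)
    (hC1 : ∀ τ : ℝ, 0 ≤ τ → DifferentiableAt ℝ u τ)
    (hcont : ContinuousOn (deriv u) (Set.Ici 0))
    (hC2 : ∀ τ : ℝ, 0 < τ → DifferentiableAt ℝ (deriv u) τ)
    (hide : ∀ τ : ℝ, 0 < τ →
      deriv u τ + u τ
        + Real.sqrt (κ / Real.pi) * ∫ s in (0:ℝ)..τ, deriv u s / Real.sqrt (τ - s) = 1) :
    (∀ τ : ℝ, 0 < τ →
      deriv (deriv u) τ + (2 - κ) * deriv u τ + u τ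
        = 1 + Real.sqrt (κ / (Real.pi * τ)) * (u 0 - 1)) ∧
    deriv u 0 = 1 - u 0 := by
  have hπ := Real.pi_pos
  have hc0 : (0:ℝ) < κ / π := div_pos hκ hπ
  set c := Real.sqrt (κ / π) with hcdef
  have hc : 0 < c := Real.sqrt_pos.2 hc0
  have hc2 : c^2 * π = κ := by
    rw [hcdef, Real.sq_sqrt hc0.le]
    field_simp
  have hu_cont : ContinuousOn u (Set.Ici 0) := fun x hx =>
    (hC1 x hx).continuousAt.continuousWithinAt
  have hmax : Continuous fun x : ℝ => max x 0 := continuous_id.max continuous_const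
  have hmem : ∀ x : ℝ, max x 0 ∈ Set.Ici (0:ℝ) := fun x => le_max_right x 0
  have hut_cont : Continuous (fun x => u (max x 0)) := hu_cont.comp_continuous hmax hmem
  have hvt_cont : Continuous (fun x => deriv u (max x 0)) := hcont.comp_continuous hmax hmem
  set ut : ℝ → ℝ := fun x => u (max x 0) with hutdef
  set vt : ℝ → ℝ := fun x => deriv u (max x 0) with hvtdef
  have hut_eq : ∀ x : ℝ, 0 ≤ x → ut x = u x := fun x hx => by
    rw [hutdef]; simp only; rw [max_eq_left hx]
  have hvt_eq : ∀ x : ℝ, 0 ≤ x → vt x = deriv u x := fun x hx => by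
    rw [hvtdef]; simp only; rw [max_eq_left hx]
  -- FTC
  have hFTC : ∀ T : ℝ, 0 ≤ T → ∫ t in (0:ℝ)..T, vt t = u T - u 0 := by
    intro T hT
    rw [intervalIntegral.integral_congr (g := deriv u)
      (fun x hx => hvt_eq x (by rw [uIcc_of_le hT] at hx; exact hx.1))]
    exact intervalIntegral.integral_eq_sub_of_hasDerivAt
      (fun x hx => (hC1 x (by rw [uIcc_of_le hT] at hx; exact hx.1)).hasDerivAt)
      ((hcont.mono (by rw [uIcc_of_le hT]; exact fun x hx => hx.1)).intervalIntegrable)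
  -- the equation in terms of vt
  have hP : ∀ t : ℝ, 0 < t →
      c * ∫ s in (0:ℝ)..t, vt s / Real.sqrt (t - s) = 1 - deriv u t - u t := by
    intro t ht
    have h := hide t ht
    have heq : ∫ s in (0:ℝ)..t, vt s / Real.sqrt (t - s)
        = ∫ s in (0:ℝ)..t, deriv u s / Real.sqrt (t - s) :=
      intervalIntegral.integral_congr (fun x hx => by
        rw [uIcc_of_le ht.le] at hx
        rw [hvt_eq x hx.1])
    rw [heq]
    linarith
  -- first Abel transform of the equation
  have hB : ∀ T : ℝ, 0 < T →
      (∫ t in (0:ℝ)..T, ((1 - vt t - ut t)/c) / Real.sqrt (T - t)) = π * (u T - u 0) := by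
    intro T hT
    have h1 := abel_transform hvt_cont hT
    rw [hFTC T hT.le] at h1
    rw [← h1]
    apply intervalIntegral.integral_congr_ae
    apply Filter.Eventually.of_forall
    intro x hx
    rw [uIoc_of_le hT.le] at hx
    have hx0 : 0 < x := hx.1
    have hinner : ∫ s in (0:ℝ)..x, vt s / Real.sqrt (x - s) = (1 - vt x - ut x)/c := by
      rw [eq_div_iff hc.ne', hvt_eq x hx0.le, hut_eq x hx0.le]
      have := hP x hx0
      linarith
    rw [hinner]
  -- splitting helper
  have hsplitc : ∀ X d : ℝ, (X/c)/d = (1/c)*(X/d) := fun X d => by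
    rw [div_div, mul_comm c d, ← div_div, div_eq_inv_mul (X/d) c, one_div]
  -- (★)
  have hStar : ∀ T : ℝ, 0 < T →
      2 * Real.sqrt T - (∫ s in (0:ℝ)..T, vt s / Real.sqrt (T - s))
        - (∫ s in (0:ℝ)..T, ut s / Real.sqrt (T - s)) = c * π * (u T - u 0) := by
    intro T hT
    have hBB := hB T hT
    have hsplit : ∫ t in (0:ℝ)..T, ((1 - vt t - ut t)/c) / Real.sqrt (T - t)
        = (1/c) * ((2 * Real.sqrt T) - (∫ s in (0:ℝ)..T, vt s / Real.sqrt (T - s))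
            - (∫ s in (0:ℝ)..T, ut s / Real.sqrt (T - s))) := by
      have heq : (fun t => ((1 - vt t - ut t)/c) / Real.sqrt (T - t))
          = fun t => (1/c) * (1 / Real.sqrt (T - t) - vt t / Real.sqrt (T - t)
              - ut t / Real.sqrt (T - t)) := by
        funext t
        rw [hsplitc, sub_div, sub_div]
      rw [heq, intervalIntegral.integral_const_mul,
        intervalIntegral.integral_sub ((ker_int T 0 T).sub (mul_ker_int hvt_cont T 0 T))
          (mul_ker_int hut_cont T 0 T),
        intervalIntegral.integral_sub (ker_int T 0 T) (mul_ker_int hvt_cont T 0 T),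
        ker_val hT.le]
    rw [hsplit] at hBB
    have hXc : (2 * Real.sqrt T - (∫ s in (0:ℝ)..T, vt s / Real.sqrt (T - s))
        - (∫ s in (0:ℝ)..T, ut s / Real.sqrt (T - s)))
        = c * (π * (u T - u 0)) := by
      rw [← hBB]
      field_simp
    rw [hXc]; ring
  -- (✦): second Abel transform
  have hDagger : ∀ T : ℝ, 0 < T →
      deriv u T = T - (∫ t in (0:ℝ)..T, ut t) + u 0 - 2 * u T + 1
        + κ * (u T - u 0) - 2 * c * Real.sqrt T * (1 - u 0) := by
    intro T hT
    have h2 := abel_transform hut_cont hT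
    have hcongr : ∫ t in (0:ℝ)..T, (∫ s in (0:ℝ)..t, ut s / Real.sqrt (t - s)) / Real.sqrt (T - t)
        = ∫ t in (0:ℝ)..T, ((2 * Real.sqrt t) / Real.sqrt (T - t)
            - ((1 - vt t - ut t)/c) / Real.sqrt (T - t)
            - (c * π * (ut t - u 0)) / Real.sqrt (T - t)) := by
      apply intervalIntegral.integral_congr_ae
      apply Filter.Eventually.of_forall
      intro x hx
      rw [uIoc_of_le hT.le] at hx
      have hx0 : 0 < x := hx.1
      have hFx : ∫ s in (0:ℝ)..x, vt s / Real.sqrt (x - s) = (1 - vt x - ut x)/c := by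
        rw [eq_div_iff hc.ne', hvt_eq x hx0.le, hut_eq x hx0.le]
        have := hP x hx0
        linarith
      have hQx : ∫ s in (0:ℝ)..x, ut s / Real.sqrt (x - s)
          = 2 * Real.sqrt x - (1 - vt x - ut x)/c - c * π * (ut x - u 0) := by
        have hs := hStar x hx0
        rw [hFx, ← hut_eq x hx0.le] at hs
        linarith
      rw [hQx, sub_div, sub_div]
    rw [hcongr] at h2
    have intA : IntervalIntegrable (fun t => (2 * Real.sqrt t) / Real.sqrt (T - t)) volume 0 T :=
      mul_ker_int (continuous_const.mul Real.continuous_sqrt) T 0 T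
    have intB : IntervalIntegrable
        (fun t => ((1 - vt t - ut t)/c) / Real.sqrt (T - t)) volume 0 T :=
      mul_ker_int (((continuous_const.sub hvt_cont).sub hut_cont).div_const c) T 0 T
    have intC : IntervalIntegrable
        (fun t => (c * π * (ut t - u 0)) / Real.sqrt (T - t)) volume 0 T :=
      mul_ker_int (continuous_const.mul (hut_cont.sub continuous_const)) T 0 T
    rw [intervalIntegral.integral_sub (intA.sub intB) intC,
      intervalIntegral.integral_sub intA intB] at h2
    -- evaluate the three pieces
    have hA : ∫ t in (0:ℝ)..T, (2 * Real.sqrt t) / Real.sqrt (T - t) = π * T := by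
      have h3 := abel_transform (f := fun _ => (1:ℝ)) continuous_const hT
      have heq : ∫ t in (0:ℝ)..T, (∫ s in (0:ℝ)..t, (1:ℝ) / Real.sqrt (t - s)) / Real.sqrt (T - t)
          = ∫ t in (0:ℝ)..T, (2 * Real.sqrt t) / Real.sqrt (T - t) :=
        intervalIntegral.integral_congr (fun x hx => by
          rw [uIcc_of_le hT.le] at hx
          rw [ker_val hx.1])
      rw [heq] at h3
      simpa using h3
    have hCval : ∫ t in (0:ℝ)..T, (c * π * (ut t - u 0)) / Real.sqrt (T - t)
        = c * π * ((∫ s in (0:ℝ)..T, ut s / Real.sqrt (T - s)) - u 0 * (2 * Real.sqrt T)) := by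
      have heq : (fun t => (c * π * (ut t - u 0)) / Real.sqrt (T - t))
          = fun t => c * π * (ut t / Real.sqrt (T - t) - u 0 * (1 / Real.sqrt (T - t))) := by
        funext t
        rw [mul_div_assoc, sub_div, mul_one_div]
      rw [heq, intervalIntegral.integral_const_mul,
        intervalIntegral.integral_sub (mul_ker_int hut_cont T 0 T)
          ((ker_int T 0 T).const_mul (u 0)),
        intervalIntegral.integral_const_mul, ker_val hT.le]
    rw [hA, hB T hT, hCval] at h2
    -- final algebra
    have e1 := hP T hT
    have e2 := hStar T hT
    have h2' : T - (u T - u 0) - c * ((∫ s in (0:ℝ)..T, ut s / Real.sqrt (T - s))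
        - u 0 * (2 * Real.sqrt T)) = ∫ t in (0:ℝ)..T, ut t :=
      mul_left_cancel₀ hπ.ne' (by linear_combination h2)
    linear_combination (-1) * h2' + c * e2 + e1 + (u T - u 0) * hc2
  -- the smooth right-hand side
  set RHSf : ℝ → ℝ := fun T => T - (∫ t in (0:ℝ)..T, ut t) + u 0 - 2 * ut T + 1
      + κ * (ut T - u 0) - 2 * c * Real.sqrt T * (1 - u 0) with hRdef
  have hKey : ∀ T : ℝ, 0 < T → deriv u T = RHSf T := by
    intro T hT
    rw [hRdef]
    simp only
    rw [hut_eq T hT.le]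
    exact hDagger T hT
  have hIU_cont : Continuous (fun T => ∫ t in (0:ℝ)..T, ut t) :=
    intervalIntegral.continuous_primitive (fun a b => hut_cont.intervalIntegrable a b) 0
  have hRcont : Continuous RHSf := by
    rw [hRdef]
    apply Continuous.sub
    · apply Continuous.add
      · apply Continuous.add
        · apply Continuous.sub
          · apply Continuous.add
            · exact (continuous_id.sub hIU_cont)
            · exact continuous_const
          · exact continuous_const.mul hut_cont
        · exact continuous_const
      · exact continuous_const.mul (hut_cont.sub continuous_const)
    · exact (continuous_const.mul Real.continuous_sqrt).mul continuous_const
  constructor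
  · -- the ODE
    intro τ hτ
    have hIU : HasDerivAt (fun T => ∫ t in (0:ℝ)..T, ut t) (ut τ) τ :=
      (hut_cont.integral_hasStrictDerivAt 0 τ).hasDerivAt
    have hUt : HasDerivAt ut (deriv u τ) τ := by
      apply ((hC1 τ hτ.le).hasDerivAt).congr_of_eventuallyEq
      filter_upwards [Ioi_mem_nhds hτ] with x hx
      exact hut_eq x (le_of_lt hx)
    have hsq : HasDerivAt (fun T => Real.sqrt T) (1/(2*Real.sqrt τ)) τ :=
      Real.hasDerivAt_sqrt hτ.ne'
    have hR : HasDerivAt RHSf (1 - ut τ - 2 * deriv u τ + κ * deriv u τ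
        - 2 * c * (1/(2*Real.sqrt τ)) * (1 - u 0)) τ := by
      rw [hRdef]
      have h := (((((hasDerivAt_id τ).sub hIU).add_const (u 0)).sub
        (hUt.const_mul 2)).add_const 1).add ((hUt.sub_const (u 0)).const_mul κ)
      have h2 := h.sub ((hsq.const_mul (2*c)).mul_const (1 - u 0))
      exact h2
    have hDu : HasDerivAt (deriv u) (1 - ut τ - 2 * deriv u τ + κ * deriv u τ
        - 2 * c * (1/(2*Real.sqrt τ)) * (1 - u 0)) τ := by
      apply hR.congr_of_eventuallyEq
      filter_upwards [Ioi_mem_nhds hτ] with x hx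
      exact hKey x hx
    rw [hDu.deriv]
    have hsqrtκ : Real.sqrt (κ/(π*τ)) = c / Real.sqrt τ := by
      rw [← div_div, Real.sqrt_div hc0.le, hcdef]
    rw [hsqrtκ, hut_eq τ hτ.le]
    have hsτ : Real.sqrt τ ≠ 0 := by positivity
    field_simp
    ring
  · -- the initial condition
    have h1 : Filter.Tendsto (deriv u) (nhdsWithin 0 (Set.Ioi 0)) (nhds (deriv u 0)) :=
      ((hcont 0 Set.self_mem_Ici).tendsto).mono_left
        (nhdsWithin_mono 0 Set.Ioi_subset_Ici_self)
    have h2 : Filter.Tendsto RHSf (nhdsWithin 0 (Set.Ioi 0)) (nhds (RHSf 0)) :=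
      (hRcont.tendsto (0:ℝ)).mono_left nhdsWithin_le_nhds
    have h3 : Filter.Tendsto (deriv u) (nhdsWithin 0 (Set.Ioi 0)) (nhds (RHSf 0)) := by
      apply h2.congr'
      filter_upwards [self_mem_nhdsWithin] with x hx
      exact (hKey x hx).symm
    have h4 : deriv u 0 = RHSf 0 := tendsto_nhds_unique h1 h3
    rw [h4, hRdef]
    simp only
    rw [intervalIntegral.integral_same, Real.sqrt_zero]
    have : ut 0 = u 0 := hut_eq 0 le_rfl
    rw [this]
    ring
end

section
/- Let $b \in (-2,2)$ with $b \neq 0$ (complex roots case), $A \in \mathbb{R}$, $t_0 \ge 0$, and let $\alpha, \beta$ be the complex conjugate roots of $m^2 + bm + 1$. Define $M(t) = \frac{1}{\alpha - \beta}\left[\sqrt{\beta}\,e^{\alpha t}\mathrm{erfc}\sqrt{\alpha t} - \sqrt{\alpha}\,e^{\beta t}\mathrm{erfc}\sqrt{\beta t}\right]$. Then $v(t) = A\,M(t + t_0)$ solves $v'' + b v' + v = -\frac{A}{\sqrt{\pi(t+t_0)}}$ for all $t$ with $t + t_0 > 0$. -/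
open Complex MeasureTheory Set

noncomputable def cerfc (w : ℂ) : ℂ :=
  (2 / Real.sqrt Real.pi : ℝ) * ∫ s : ℝ in Set.Ioi (0:ℝ), Complex.exp (-(w + s)^2)

-- integrability of the basic integrand
lemma integrable_gauss_shift (a : ℝ) : Integrable (fun s : ℝ => Real.exp (-(s + a)^2)) := by
  have h := (integrable_exp_neg_mul_sq (b := 1) one_pos).comp_add_right a
  simpa using h

lemma cerfc_integrand_integrable (w : ℂ) :
    IntegrableOn (fun s : ℝ => Complex.exp (-(w + s)^2)) (Set.Ioi 0) := by
  have hc : Continuous fun s : ℝ => Complex.exp (-(w + s)^2) := by continuity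
  refine (Integrable.mono' ((( integrable_gauss_shift w.re).const_mul (Real.exp (w.im^2))).restrict)
    hc.aestronglyMeasurable ?_)
  refine Filter.Eventually.of_forall (fun s => ?_)
  rw [Complex.norm_exp, ← Real.exp_add]
  apply Real.exp_le_exp.2
  have : (-(w + (s:ℂ)) ^ 2).re = w.im^2 - (w.re + s)^2 := by
    simp [Complex.add_re, Complex.add_im, pow_two, Complex.mul_re]
  rw [this]
  nlinarith [sq_nonneg (w.re + s - (s + w.re))]

lemma inner_hasDerivAt (s : ℝ) (x : ℂ) :
    HasDerivAt (fun x : ℂ => Complex.exp (-(x + s)^2)) (-2*(x+s)*Complex.exp (-(x + s)^2)) x := by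
  have h1 : HasDerivAt (fun x : ℂ => -(x + s)^2) (-(2*(x+s))) x := by
    have := (((hasDerivAt_id x).add_const (s:ℂ)).pow 2).neg
    exact this.congr_deriv (by norm_num)
  have := h1.cexp
  refine this.congr_deriv ?_
  ring

lemma tendsto_integrand_zero (w : ℂ) :
    Filter.Tendsto (fun s : ℝ => Complex.exp (-(w + s)^2)) Filter.atTop (nhds 0) := by
  rw [tendsto_zero_iff_norm_tendsto_zero]
  have hnorm : ∀ s : ℝ, ‖Complex.exp (-(w + s)^2)‖ = Real.exp (w.im^2 - (w.re + s)^2) := by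
    intro s
    rw [Complex.norm_exp]
    congr 1
    simp [pow_two, Complex.mul_re]
  simp_rw [hnorm]
  apply Real.tendsto_exp_atBot.comp
  have h1 : Filter.Tendsto (fun s : ℝ => w.re + s) Filter.atTop Filter.atTop :=
    Filter.tendsto_atTop_add_const_left _ _ Filter.tendsto_id
  have hsq : Filter.Tendsto (fun s : ℝ => (w.re + s)^2) Filter.atTop Filter.atTop := by
    simpa [pow_two] using h1.atTop_mul_atTop₀ h1
  have h2 : Filter.Tendsto (fun s : ℝ => -(w.re + s)^2) Filter.atTop Filter.atBot :=
    Filter.tendsto_neg_atTop_atBot.comp hsq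
  have h3 := Filter.tendsto_atBot_add_const_left Filter.atTop (w.im^2) h2
  simpa [sub_eq_add_neg] using h3

lemma norm_deriv_integrand (x : ℂ) (s : ℝ) :
    ‖-2*(x+s)*Complex.exp (-(x + s)^2)‖
      = 2 * ‖x + (s:ℂ)‖ * Real.exp (x.im^2 - (x.re + s)^2) := by
  rw [norm_mul, norm_mul, Complex.norm_exp]
  have : (-(x + (s:ℂ)) ^ 2).re = x.im^2 - (x.re + s)^2 := by
    simp [pow_two, Complex.mul_re]
  rw [this]
  norm_num

lemma sq_shift_ineq {x K s : ℝ} (hx : |x| ≤ K) (hs : 0 ≤ s) :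
    (s - K)^2 ≤ (x + s)^2 + K^2 := by
  have h1 : 0 ≤ x + K := by cases abs_le.1 hx; linarith
  nlinarith [sq_nonneg x, mul_nonneg hs h1]

noncomputable def dbound (w : ℂ) (s : ℝ) : ℝ :=
  2 * (‖w‖ + 1 + s) * Real.exp ((‖w‖+1)^2 + (|w.re|+1)^2) * Real.exp (-(s - (|w.re|+1))^2)

lemma dbound_spec (w : ℂ) {x : ℂ} (hx : x ∈ Metric.ball w 1) {s : ℝ} (hs : 0 < s) :
    ‖-2*(x+s)*Complex.exp (-(x + s)^2)‖ ≤ dbound w s := by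
  rw [norm_deriv_integrand]
  have hxw : ‖x - w‖ < 1 := by simpa [Metric.mem_ball, dist_eq_norm] using hx
  have hxn : ‖x‖ ≤ ‖w‖ + 1 := by
    have := norm_sub_norm_le x w
    linarith
  have h1 : ‖x + (s:ℂ)‖ ≤ ‖w‖ + 1 + s := by
    calc ‖x + (s:ℂ)‖ ≤ ‖x‖ + ‖(s:ℂ)‖ := norm_add_le _ _
    _ ≤ ‖w‖ + 1 + s := by
        rw [Complex.norm_real, Real.norm_eq_abs, abs_of_pos hs]; linarith
  have him : x.im^2 ≤ (‖w‖+1)^2 := by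
    have h := Complex.abs_im_le_norm x
    have : |x.im| ≤ ‖w‖ + 1 := le_trans h hxn
    nlinarith [abs_nonneg x.im, _root_.sq_abs x.im]
  have hre : |x.re| ≤ |w.re| + 1 := by
    have h := Complex.abs_re_le_norm (x - w)
    have h2 : |x.re - w.re| < 1 := by simpa [Complex.sub_re] using lt_of_le_of_lt h hxw
    have h3 : |x.re| ≤ |w.re| + |x.re - w.re| := by
      have := abs_add_le w.re (x.re - w.re)
      simpa using this
    linarith
  have key : x.im^2 - (x.re + s)^2 ≤ ((‖w‖+1)^2 + (|w.re|+1)^2) + (-(s - (|w.re|+1))^2) := by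
    have := sq_shift_ineq hre (le_of_lt hs)
    linarith
  unfold dbound
  have hexp := Real.exp_le_exp.2 key
  calc 2 * ‖x + (s:ℂ)‖ * Real.exp (x.im^2 - (x.re + s)^2)
      ≤ (2 * (‖w‖ + 1 + s)) * Real.exp (((‖w‖+1)^2 + (|w.re|+1)^2) + (-(s - (|w.re|+1))^2)) := by
        apply mul_le_mul (by linarith) hexp (Real.exp_nonneg _) (by positivity)
    _ = 2 * (‖w‖ + 1 + s) * Real.exp ((‖w‖+1)^2 + (|w.re|+1)^2) * Real.exp (-(s - (|w.re|+1))^2) := by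
        rw [Real.exp_add]; ring

lemma dbound_integrable (w : ℂ) : IntegrableOn (dbound w) (Set.Ioi 0) := by
  apply Integrable.integrableOn
  unfold dbound
  set K := |w.re| + 1 with hK
  have base : Integrable (fun u : ℝ => (‖w‖ + 1 + K + u) * Real.exp (-u^2)) := by
    have h1 : Integrable (fun u : ℝ => Real.exp (-u^2)) := by
      simpa using integrable_exp_neg_mul_sq (b := 1) one_pos
    have h2 : Integrable (fun u : ℝ => u * Real.exp (-u^2)) := by
      simpa using integrable_mul_exp_neg_mul_sq (b := 1) one_pos
    apply ((h1.const_mul (‖w‖ + 1 + K)).add h2).congr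
    filter_upwards with u
    simp only [Pi.add_apply]
    ring
  have hcomp := base.comp_sub_right K
  apply ((hcomp.const_mul (2 * Real.exp ((‖w‖+1)^2 + K^2))).congr ?_)
  filter_upwards with s
  ring

lemma inner_hasDerivAt' (w z : ℂ) :
    HasDerivAt (fun z : ℂ => Complex.exp (-(w + z)^2)) (-2*(w+z)*Complex.exp (-(w + z)^2)) z := by
  have h1 : HasDerivAt (fun z : ℂ => -(w + z)^2) (-(2*(w+z))) z := by
    have := (((hasDerivAt_id z).const_add w).pow 2).neg
    exact this.congr_deriv (by norm_num)
  have := h1.cexp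
  refine this.congr_deriv ?_
  ring

lemma deriv_integrand_integrableOn (w : ℂ) :
    IntegrableOn (fun s : ℝ => -2*(w+s)*Complex.exp (-(w + s)^2)) (Set.Ioi 0) := by
  have hc : Continuous fun s : ℝ => -2*(w+s)*Complex.exp (-(w + s)^2) := by continuity
  refine Integrable.mono' (dbound_integrable w) hc.aestronglyMeasurable.restrict ?_
  rw [MeasureTheory.ae_restrict_iff' measurableSet_Ioi]
  filter_upwards with s hs
  exact dbound_spec w (Metric.mem_ball_self one_pos) hs

lemma integral_deriv_integrand (w : ℂ) :
    (∫ s : ℝ in Set.Ioi (0:ℝ), -2*(w+s)*Complex.exp (-(w + s)^2)) = -Complex.exp (-w^2) := by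
  have h := integral_Ioi_of_hasDerivAt_of_tendsto' (a := (0:ℝ)) (m := (0:ℂ))
    (f := fun s : ℝ => Complex.exp (-(w + s)^2))
    (f' := fun s : ℝ => -2*(w+s)*Complex.exp (-(w + s)^2))
    (fun x _ => (inner_hasDerivAt' w (x:ℝ)).comp_ofReal)
    (deriv_integrand_integrableOn w) (tendsto_integrand_zero w)
  rw [h]
  norm_num

lemma hasDerivAt_cerfc (w : ℂ) :
    HasDerivAt cerfc (-((2 / Real.sqrt Real.pi : ℝ) * Complex.exp (-w^2))) w := by
  have main := hasDerivAt_integral_of_dominated_loc_of_deriv_le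
    (μ := MeasureTheory.volume.restrict (Set.Ioi (0:ℝ)))
    (F := fun (x : ℂ) (s : ℝ) => Complex.exp (-(x + s)^2))
    (F' := fun (x : ℂ) (s : ℝ) => -2*(x+s)*Complex.exp (-(x + s)^2))
    (x₀ := w) (bound := dbound w) (s := Metric.ball w 1) (Metric.ball_mem_nhds w one_pos)
    (Filter.Eventually.of_forall fun x =>
      (Continuous.aestronglyMeasurable (by continuity)).restrict)
    (cerfc_integrand_integrable w)
    (Continuous.aestronglyMeasurable (by continuity)).restrict
    ?_ (dbound_integrable w) ?_
  · have h2 := (main.2).const_mul ((2 / Real.sqrt Real.pi : ℝ) : ℂ)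
    rw [integral_deriv_integrand w] at h2
    unfold cerfc
    refine h2.congr_deriv (Eq.symm ?_)
    ring
  · rw [MeasureTheory.ae_restrict_iff' measurableSet_Ioi]
    filter_upwards with s hs x hx
    exact dbound_spec w hx hs
  · rw [MeasureTheory.ae_restrict_iff' measurableSet_Ioi]
    filter_upwards with s _ x _
    exact inner_hasDerivAt s x

lemma cpow_half_mul_ofReal {z : ℂ} (hz : z ≠ 0) {t : ℝ} (ht : 0 < t) :
    (z * t) ^ (1/2 : ℂ) = z ^ (1/2 : ℂ) * ((Real.sqrt t : ℝ) : ℂ) := by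
  have ht' : ((t:ℝ):ℂ) ≠ 0 := Complex.ofReal_ne_zero.2 ht.ne'
  rw [Complex.cpow_def_of_ne_zero (mul_ne_zero hz ht'),
      Complex.cpow_def_of_ne_zero hz, Complex.log_mul_ofReal t ht z hz,
      add_mul, Complex.exp_add, mul_comm (Complex.exp _)]
  congr 1
  have : ((Real.sqrt t : ℝ) : ℂ) = ((t:ℝ):ℂ) ^ ((1/2 : ℝ):ℂ) := by
    rw [← Complex.ofReal_cpow (le_of_lt ht)]
    norm_num [Real.sqrt_eq_rpow]
  rw [this, Complex.cpow_def_of_ne_zero ht', ← Complex.ofReal_log (le_of_lt ht)]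
  norm_num

lemma sqrt_mul_sqrt_conj {α β : ℂ} (him : 0 < α.im) (hβ : β = starRingEnd ℂ α)
    (hαβ : α * β = 1) : α ^ (1/2:ℂ) * β ^ (1/2:ℂ) = 1 := by
  have hα0 : α ≠ 0 := fun h => by simp [h] at him
  have hβ0 : β ≠ 0 := by
    rw [hβ]; simpa using hα0
  have hargβ : β.arg = -α.arg := by
    rw [hβ, Complex.arg_conj]
    have : α.arg ≠ Real.pi := by
      intro h
      rw [Complex.arg_eq_pi_iff] at h
      exact absurd h.2 (ne_of_gt him)
    simp [this]
  have hlog : Complex.log α + Complex.log β = 0 := by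
    rw [← Complex.log_mul hα0 hβ0, hαβ, Complex.log_one]
    rw [hargβ]
    simp [Real.pi_pos]
    exact Real.pi_pos.le
  rw [Complex.cpow_def_of_ne_zero hα0, Complex.cpow_def_of_ne_zero hβ0,
      ← Complex.exp_add, ← add_mul, hlog, zero_mul, Complex.exp_zero]

noncomputable def Efn (a : ℂ) (t : ℝ) : ℂ :=
  Complex.exp (a * t) * cerfc ((a * t) ^ (1/2 : ℂ))

lemma sq_of_cpow_half {a : ℂ} (ha : a ≠ 0) : a ^ (1/2:ℂ) * a ^ (1/2:ℂ) = a := by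
  rw [← Complex.cpow_add _ _ ha]
  norm_num

lemma hasDerivAt_Efn (a : ℂ) (haim : a.im ≠ 0) {t : ℝ} (ht : 0 < t) :
    HasDerivAt (Efn a)
      (a * Efn a t - a ^ (1/2:ℂ) / ((Real.sqrt Real.pi * Real.sqrt t : ℝ) : ℂ)) t := by
  have ha0 : a ≠ 0 := fun h => by simp [h] at haim
  -- local form of the function near t
  have heq : (fun u : ℝ => Complex.exp (a * u) * cerfc (a ^ (1/2:ℂ) * ((Real.sqrt u : ℝ):ℂ)))
      =ᶠ[nhds t] Efn a := by
    filter_upwards [eventually_gt_nhds ht] with u hu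
    unfold Efn
    rw [cpow_half_mul_ofReal ha0 hu]
  -- derivative of exp (a u)
  have h1 : HasDerivAt (fun u : ℝ => Complex.exp (a * u)) (a * Complex.exp (a * t)) t := by
    have : HasDerivAt (fun z : ℂ => Complex.exp (a * z)) (a * Complex.exp (a * t)) (t:ℂ) := by
      simpa [mul_comm] using (((hasDerivAt_id (t:ℂ)).const_mul a).cexp)
    exact this.comp_ofReal
  -- derivative of inner sqrt map
  have h2 : HasDerivAt (fun u : ℝ => a ^ (1/2:ℂ) * ((Real.sqrt u : ℝ):ℂ))
      (a ^ (1/2:ℂ) * ((1 / (2 * Real.sqrt t) : ℝ):ℂ)) t := by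
    have hs : HasDerivAt (fun u : ℝ => ((Real.sqrt u : ℝ):ℂ)) ((1 / (2 * Real.sqrt t) :ℝ):ℂ) t :=
      (Real.hasDerivAt_sqrt ht.ne').ofReal_comp
    exact hs.const_mul _
  -- derivative of cerfc composed
  have h3 : HasDerivAt (fun u : ℝ => cerfc (a ^ (1/2:ℂ) * ((Real.sqrt u : ℝ):ℂ)))
      ((a ^ (1/2:ℂ) * ((1 / (2 * Real.sqrt t) : ℝ):ℂ)) •
        (-((2 / Real.sqrt Real.pi : ℝ) * Complex.exp (-(a ^ (1/2:ℂ) * ((Real.sqrt t : ℝ):ℂ))^2)))) t :=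
    (hasDerivAt_cerfc _).scomp t h2
  have h4 := (h1.mul h3)
  apply HasDerivAt.congr_of_eventuallyEq _ heq.symm
  refine h4.congr_deriv (Eq.symm ?_)
  -- now an algebraic identity
  have hsq : (a ^ (1/2:ℂ) * ((Real.sqrt t : ℝ):ℂ))^2 = a * t := by
    have h5 : ((Real.sqrt t : ℝ):ℂ)^2 = (t:ℂ) := by
      rw [← Complex.ofReal_pow, Real.sq_sqrt ht.le]
    rw [mul_pow, h5, pow_two, sq_of_cpow_half ha0]
  rw [hsq]
  have hexp : Complex.exp (a * t) * Complex.exp (-(a * t)) = 1 := by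
    rw [← Complex.exp_add]; simp
  have hsπ : (Real.sqrt Real.pi : ℝ) ≠ 0 := by
    positivity
  have hst : (Real.sqrt t : ℝ) ≠ 0 := by positivity
  have hE : Efn a t = Complex.exp (a * t) * cerfc (a ^ (1/2:ℂ) * ((Real.sqrt t : ℝ):ℂ)) := by
    unfold Efn
    rw [cpow_half_mul_ofReal ha0 ht]
  rw [hE]
  push_cast
  have hsπ' : ((Real.sqrt Real.pi :ℝ):ℂ) ≠ 0 := Complex.ofReal_ne_zero.2 hsπ
  have hst' : ((Real.sqrt t :ℝ):ℂ) ≠ 0 := Complex.ofReal_ne_zero.2 hst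
  linear_combination (a ^ (1/2:ℂ) / (((Real.sqrt Real.pi:ℝ):ℂ) * ((Real.sqrt t:ℝ):ℂ))) * hexp

lemma hasDerivAt_M0 (α β : ℂ) (hαim : α.im ≠ 0) (hβim : β.im ≠ 0) {u : ℝ} (hu : 0 < u) :
    HasDerivAt (fun u : ℝ => (1/(α-β)) * (β^(1/2:ℂ) * Efn α u - α^(1/2:ℂ) * Efn β u))
      ((1/(α-β)) * (β^(1/2:ℂ) * α * Efn α u - α^(1/2:ℂ) * β * Efn β u)) u := by
  have h := (((hasDerivAt_Efn α hαim hu).const_mul (β^(1/2:ℂ))).sub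
    ((hasDerivAt_Efn β hβim hu).const_mul (α^(1/2:ℂ)))).const_mul (1/(α-β))
  refine h.congr_deriv ?_
  ring

lemma hasDerivAt_M1 (α β : ℂ) (hαim : α.im ≠ 0) (hβim : β.im ≠ 0)
    (hne : α - β ≠ 0) (hsq1 : α^(1/2:ℂ) * β^(1/2:ℂ) = 1) {u : ℝ} (hu : 0 < u) :
    HasDerivAt (fun u : ℝ => (1/(α-β)) * (β^(1/2:ℂ) * α * Efn α u - α^(1/2:ℂ) * β * Efn β u))
      ((1/(α-β)) * (β^(1/2:ℂ) * α^2 * Efn α u - α^(1/2:ℂ) * β^2 * Efn β u)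
        - 1/((Real.sqrt Real.pi * Real.sqrt u : ℝ):ℂ)) u := by
  have h := (((hasDerivAt_Efn α hαim hu).const_mul (β^(1/2:ℂ) * α)).sub
    ((hasDerivAt_Efn β hβim hu).const_mul (α^(1/2:ℂ) * β))).const_mul (1/(α-β))
  refine h.congr_deriv (Eq.symm ?_)
  have key : ((α - β) * (1/(α-β))) * (α^(1/2:ℂ) * β^(1/2:ℂ)) = 1 := by
    rw [mul_one_div_cancel hne, hsq1, one_mul]
  linear_combination (1/((Real.sqrt Real.pi * Real.sqrt u : ℝ):ℂ)) * key

/-- For `b ∈ (-2,2)`, `b ≠ 0`, `A ∈ ℝ`, `t₀ ≥ 0`, with `α, β` the complex conjugate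
roots of `m² + bm + 1` (`Im α > 0`), and
`M(t) = (√β e^{αt}erfc(√(αt)) - √α e^{βt}erfc(√(βt)))/(α-β)`,
the function `v(t) = A M(t+t₀)` solves `v'' + b v' + v = -A/√(π(t+t₀))` whenever
`t + t₀ > 0`. -/
theorem stmt_18 (b A t₀ : ℝ) (hb : b ∈ Set.Ioo (-2:ℝ) 2) (hb0 : b ≠ 0) (ht₀ : 0 ≤ t₀)
    (α β : ℂ) (hα : α ^ 2 + (b:ℂ) * α + 1 = 0) (him : 0 < α.im)
    (hβ : β = starRingEnd ℂ α)
    (M v : ℝ → ℂ)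
    (hM : ∀ t : ℝ, M t = (1 / (α - β)) *
      (β ^ (1/2 : ℂ) * Complex.exp (α * t) * cerfc ((α * t) ^ (1/2 : ℂ))
        - α ^ (1/2 : ℂ) * Complex.exp (β * t) * cerfc ((β * t) ^ (1/2 : ℂ))))
    (hv : ∀ t : ℝ, v t = (A : ℂ) * M (t + t₀)) :
    ∀ t : ℝ, 0 < t + t₀ →
      deriv (deriv v) t + (b : ℂ) * deriv v t + v t
        = -(A : ℂ) / (Real.sqrt (Real.pi * (t + t₀)) : ℝ) := by
  intro t ht
  have hαim : α.im ≠ 0 := him.ne'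
  have hβim : β.im ≠ 0 := by
    rw [hβ, Complex.conj_im]
    simpa using hαim
  have hne : α - β ≠ 0 := by
    rw [hβ]
    intro h
    rw [sub_eq_zero] at h
    have := congrArg Complex.im h
    rw [Complex.conj_im] at this
    exact hαim (by linarith)
  -- conjugate quadratic
  have hβquad : β ^ 2 + (b:ℂ) * β + 1 = 0 := by
    have := congrArg (starRingEnd ℂ) hα
    simpa [map_add, map_mul, map_pow, Complex.conj_ofReal, ← hβ] using this
  -- α * β = 1
  have hIm := congrArg Complex.im hα
  have hRe := congrArg Complex.re hα
  simp only [Complex.add_im, Complex.add_re, Complex.mul_im, Complex.mul_re, pow_two,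
    Complex.ofReal_re, Complex.ofReal_im, Complex.one_im, Complex.one_re,
    Complex.zero_im, Complex.zero_re] at hIm hRe
  have hfact : (2*α.re + b) * α.im = 0 := by linarith
  have hre : 2*α.re + b = 0 := by
    rcases mul_eq_zero.1 hfact with h | h
    · exact h
    · exact absurd h hαim
  have hns : Complex.normSq α = 1 := by
    rw [Complex.normSq_apply]
    have h6 : (2*α.re + b) * α.re = 0 := mul_eq_zero_of_left hre α.re
    nlinarith [hRe, h6]
  have hprod : α * β = 1 := by
    rw [hβ, Complex.mul_conj, hns, Complex.ofReal_one]
  have hsq1 : α^(1/2:ℂ) * β^(1/2:ℂ) = 1 := sqrt_mul_sqrt_conj him hβ hprod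
  -- rewrite v
  have hVeq : v = fun s : ℝ =>
      (A:ℂ) * ((1/(α-β)) * (β^(1/2:ℂ) * Efn α (s+t₀) - α^(1/2:ℂ) * Efn β (s+t₀))) := by
    funext s
    rw [hv, hM]
    unfold Efn
    push_cast
    ring
  rw [hVeq]
  -- neighborhood positivity
  have hev0 : ∀ᶠ s in nhds t, 0 < s + t₀ := by
    filter_upwards [Ioi_mem_nhds (show -t₀ < t by linarith)] with s hs
    have : -t₀ < s := hs
    linarith
  -- first derivative
  have hder1 : ∀ s : ℝ, 0 < s + t₀ →
      HasDerivAt (fun s : ℝ =>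
        (A:ℂ) * ((1/(α-β)) * (β^(1/2:ℂ) * Efn α (s+t₀) - α^(1/2:ℂ) * Efn β (s+t₀))))
        ((A:ℂ) * ((1/(α-β)) * (β^(1/2:ℂ) * α * Efn α (s+t₀) - α^(1/2:ℂ) * β * Efn β (s+t₀)))) s := by
    intro s hs
    have h := ((hasDerivAt_M0 α β hαim hβim hs).comp_add_const s t₀).const_mul (A:ℂ)
    exact h
  -- second derivative function
  have hder2 : ∀ s : ℝ, 0 < s + t₀ →
      HasDerivAt (fun s : ℝ =>
        (A:ℂ) * ((1/(α-β)) * (β^(1/2:ℂ) * α * Efn α (s+t₀) - α^(1/2:ℂ) * β * Efn β (s+t₀))))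
        ((A:ℂ) * ((1/(α-β)) * (β^(1/2:ℂ) * α^2 * Efn α (s+t₀) - α^(1/2:ℂ) * β^2 * Efn β (s+t₀))
          - 1/((Real.sqrt Real.pi * Real.sqrt (s+t₀) : ℝ):ℂ))) s := by
    intro s hs
    have h := ((hasDerivAt_M1 α β hαim hβim hne hsq1 hs).comp_add_const s t₀).const_mul (A:ℂ)
    exact h
  -- deriv of our function agrees with formula near t
  have hdeq : deriv (fun s : ℝ =>
      (A:ℂ) * ((1/(α-β)) * (β^(1/2:ℂ) * Efn α (s+t₀) - α^(1/2:ℂ) * Efn β (s+t₀))))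
      =ᶠ[nhds t] (fun s : ℝ =>
      (A:ℂ) * ((1/(α-β)) * (β^(1/2:ℂ) * α * Efn α (s+t₀) - α^(1/2:ℂ) * β * Efn β (s+t₀)))) := by
    filter_upwards [hev0] with s hs
    exact (hder1 s hs).deriv
  rw [hdeq.deriv_eq, (hder1 t ht).deriv, (hder2 t ht).deriv]
  -- final algebra
  have hsqrt : Real.sqrt (Real.pi * (t + t₀)) = Real.sqrt Real.pi * Real.sqrt (t + t₀) :=
    Real.sqrt_mul Real.pi_pos.le _
  rw [hsqrt]
  have key : ((α - β) * (1/(α - β))) = 1 := mul_one_div_cancel hne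
  push_cast
  linear_combination ((A:ℂ)*(1/(α-β))*(β^(1/2:ℂ))*(Efn α (t+t₀))) * hα
    - ((A:ℂ)*(1/(α-β))*(α^(1/2:ℂ))*(Efn β (t+t₀))) * hβquad
end
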